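/- There exists a map B : (⨂^un_{i∈I} H_i) × (⨂^un_{i∈I} H_i) → ℂ which is additive and conjugate-ℂ-linear in the first variable, additive and ℂ-linear in the second variable, satisfies B(⊗x, ⊗y) = h(x,y) for all x, y ∈ Π_{i∈I} H_i with ‖x_i‖ = ‖y_i‖ = 1 for every i, satisfies B(η, ξ) = conj(B(ξ, η)) for all ξ, η, and is positive definite: B(ξ, ξ) is a nonnegative real number for every ξ ∈ ⨂^un_{i∈I} H_i, and B(ξ, ξ) = 0 implies ξ = 0. In other words, ⨂^un_{i∈I} H_i carries an inner product determined on elementary tensors of unit families by the formula h. -/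

import Mathlib

open scoped TensorProduct Classical ComplexConjugate

/-- The form `h(x,y)`: the (finite) product `∏_{i∈I} ⟪x_i, y_i⟫` when `⟪x_i, y_i⟫ = 1` for
all but finitely many `i`, and `0` otherwise. -/
noncomputable def hform {I : Type*} (H : I → Type*) [∀ i, NormedAddCommGroup (H i)]
    [∀ i, InnerProductSpace ℂ (H i)] (x y : ∀ i, H i) : ℂ :=
  if {i | (inner ℂ (x i) (y i) : ℂ) ≠ 1}.Finite then ∏ᶠ i, (inner ℂ (x i) (y i) : ℂ) else 0

/-- `⨂^un_{i∈I} H_i`: the span in `⨂_{i∈I} H_i` of the elementary tensors of families of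
unit vectors. -/
noncomputable def unTensorSpan {I : Type*} (H : I → Type*) [∀ i, NormedAddCommGroup (H i)]
    [∀ i, InnerProductSpace ℂ (H i)] : Submodule ℂ (⨂[ℂ] i, H i) :=
  Submodule.span ℂ {t | ∃ x : ∀ i, H i, (∀ i, ‖x i‖ = 1) ∧ t = PiTensorProduct.tprod ℂ x}

/-- The elementary tensor of a family of unit vectors, as an element of `⨂^un_{i∈I} H_i`. -/
noncomputable def unTensorElem {I : Type*} (H : I → Type*) [∀ i, NormedAddCommGroup (H i)]
    [∀ i, InnerProductSpace ℂ (H i)] (x : ∀ i, H i) (hx : ∀ i, ‖x i‖ = 1) :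
    unTensorSpan H :=
  ⟨PiTensorProduct.tprod ℂ x, Submodule.subset_span ⟨x, hx, rfl⟩⟩

/-!
The form is first built on the whole algebraic tensor product: `hform x y` is multilinear in `y`
and `conj (hform x y) = hform y x`, so two applications of the universal property give a
Hermitian sesquilinear form `B` with `B (⊗x) (⊗y) = hform x y`.

For unit vectors `⟪u, v⟫ = 1` iff `u = v`, so `⊗x` and `⊗y` are orthogonal unless `x` and `y`
differ in only finitely many coordinates. This splits a finite combination of unit elementary
tensors into mutually orthogonal classes. Inside a class all families agree with one unit family
`z` off a finite set `S`, and the combination is the image of an element of `⨂_{i ∈ S} V i`, where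
`V i` is the finite-dimensional span of the `i`-th coordinates. A product of orthonormal bases of
the `V i` is sent to orthonormal tensors, so on a class `B ξ ξ` is a sum of squared moduli of
coordinates.
-/

open Function PiTensorProduct
open scoped ComplexOrder

section FinprodOrZero

variable {α M : Type*}

noncomputable def finprodOrZero [CommMonoidWithZero M] (f : α → M) : M :=
  if (mulSupport f).Finite then ∏ᶠ i, f i else 0

theorem finite_mulSupport_update_iff [One M] [DecidableEq α] (f : α → M) (i : α) (b : M) :
    (mulSupport (update f i b)).Finite ↔ (mulSupport f).Finite := by
  rw [mulSupport_update_eq_ite]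
  split_ifs
  · rw [← Set.finite_insert (a := i), Set.insert_sdiff_singleton, Set.finite_insert]
  · exact Set.finite_insert

theorem finprodOrZero_update [CommMonoidWithZero M] [DecidableEq α] (f : α → M) (i : α) (a : M) :
    finprodOrZero (update f i a) = a * finprodOrZero (update f i 1) := by
  unfold finprodOrZero
  simp only [finite_mulSupport_update_iff]
  split_ifs with hf
  · rw [← mul_finprod_cond_ne i ((finite_mulSupport_update_iff f i a).2 hf),
      ← mul_finprod_cond_ne i ((finite_mulSupport_update_iff f i 1).2 hf)]
    simp only [update_self, one_mul]
    congr 1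
    exact finprod_congr fun j => finprod_congr fun hj => by rw [update_of_ne hj, update_of_ne hj]
  · rw [mul_zero]

theorem finprodOrZero_star [CommSemiring M] [StarRing M] (f : α → M) :
    finprodOrZero (fun i => star (f i)) = star (finprodOrZero f) := by
  have hsupp : mulSupport (fun i => star (f i)) = mulSupport f :=
    mulSupport_comp_eq star (star_injective.eq_iff' (star_one M)) f
  unfold finprodOrZero
  rw [hsupp]
  split_ifs
  · exact (MulEquivClass.map_finprod (starMulAut (R := M)) f).symm
  · rw [star_zero]

theorem finprodOrZero_eq_prod [CommMonoidWithZero M] {f : α → M} {s : Finset α}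
    (h : mulSupport f ⊆ s) : finprodOrZero f = ∏ i ∈ s, f i := by
  rw [finprodOrZero, if_pos (s.finite_toSet.subset h), finprod_eq_prod_of_mulSupport_subset f h]

end FinprodOrZero

namespace LinearMap

variable {R M : Type*} [CommRing R] [StarRing R] [PartialOrder R] [AddCommMonoid M] [Module R M]

def IsPosDefAt {I : R →+* R} (B : M →ₛₗ[I] M →ₗ[R] R) (x : M) : Prop :=
  0 ≤ B x x ∧ (B x x = 0 → x = 0)

theorem IsPosDefAt.add [IsOrderedAddMonoid R] {B : M →ₗ⋆[R] M →ₗ[R] R} (hB : B.IsSymm)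
    {x y : M} (hx : B.IsPosDefAt x) (hy : B.IsPosDefAt y) (hxy : B x y = 0) :
    B.IsPosDefAt (x + y) := by
  have hyx : B y x = 0 := by rw [← hB.eq x y, hxy, map_zero]
  have hsum : B (x + y) (x + y) = B x x + B y y := by simp [hxy, hyx]
  rw [IsPosDefAt, hsum]
  refine ⟨add_nonneg hx.1 hy.1, fun h => ?_⟩
  obtain ⟨hxx, hyy⟩ := (add_eq_zero_iff_of_nonneg hx.1 hy.1).1 h
  rw [hx.2 hxx, hy.2 hyy, add_zero]

theorem isPosDefAt_sum_smul_of_orthonormal [StarOrderedRing R] [NoZeroDivisors R] {κ : Type*}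
    [Fintype κ] [DecidableEq κ] (B : M →ₗ⋆[R] M →ₗ[R] R) (e : κ → M)
    (he : ∀ r s, B (e r) (e s) = if r = s then 1 else 0) (c : κ → R) :
    B.IsPosDefAt (∑ r, c r • e r) := by
  have hB : B (∑ r, c r • e r) (∑ r, c r • e r) = star c ⬝ᵥ c := by
    simp [map_sum, he, dotProduct, starRingEnd_apply, mul_comm]
  rw [IsPosDefAt, hB]
  refine ⟨dotProduct_star_self_nonneg c, fun h => ?_⟩
  simp [dotProduct_star_self_eq_zero.1 h]

end LinearMap

namespace PiTensorProduct

variable {ι R : Type*} [CommSemiring R] {M : ι → Type*} [∀ i, AddCommMonoid (M i)]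
  [∀ i, Module R (M i)]

noncomputable def extendBy (P : ι → Prop) [DecidablePred P] (z : ∀ i : {a // ¬ P a}, M i) :
    (⨂[R] i : {a // P a}, M i) →ₗ[R] ⨂[R] i, M i :=
  lift ((tprod R).domDomRestrict P z)

@[simp]
theorem extendBy_tprod (P : ι → Prop) [DecidablePred P] (z : ∀ i : {a // ¬ P a}, M i)
    (v : ∀ i : {a // P a}, M i) :
    extendBy P z (tprod R v) = tprod R fun i => if h : P i then v ⟨i, h⟩ else z ⟨i, h⟩ :=
  lift.tprod v

variable [StarRing R]

noncomputable def sesqLift (K : (Π i, M i) → MultilinearMap R M R)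
    (hK : ∀ x y, star (K x y) = K y x) : (⨂[R] i, M i) →ₗ⋆[R] (⨂[R] i, M i) →ₗ[R] R :=
  LinearMap.flip <| lift
    { toFun y := (starLinearEquiv R (A := R)).toLinearMap.comp (lift (K y))
      map_update_add' y i u v := by
        have : K (update y i (u + v)) = K (update y i u) + K (update y i v) := by
          ext x
          simp only [add_apply, ← hK x, MultilinearMap.map_update_add, star_add]
        ext ξ
        simp [this]
      map_update_smul' y i c u := by
        have : K (update y i (c • u)) = star c • K (update y i u) := by
          ext x
          simp [← hK x, MultilinearMap.map_update_smul]
        ext ξ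
        simp [this] }

variable {K : (Π i, M i) → MultilinearMap R M R} {hK : ∀ x y, star (K x y) = K y x}

@[simp]
theorem sesqLift_tprod_tprod (x y : Π i, M i) :
    sesqLift K hK (tprod R x) (tprod R y) = K x y := by
  simp [sesqLift, hK]

theorem isSymm_sesqLift : (sesqLift K hK).IsSymm := by
  refine LinearMap.isSymm_def.2 fun ξ η => ?_
  induction ξ using PiTensorProduct.induction_on with
  | smul_tprod r x =>
    induction η using PiTensorProduct.induction_on with
    | smul_tprod s y => simp [starRingEnd_apply, hK, mul_left_comm]
    | add η₁ η₂ h₁ h₂ => simp only [map_add, LinearMap.add_apply, h₁, h₂]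
  | add ξ₁ ξ₂ h₁ h₂ => simp only [map_add, LinearMap.add_apply, h₁, h₂]

end PiTensorProduct

section TensorInner

variable {I : Type*} {H : I → Type*} [∀ i, NormedAddCommGroup (H i)]
  [∀ i, InnerProductSpace ℂ (H i)]

theorem hform_eq_finprodOrZero (x y : ∀ i, H i) :
    hform H x y = finprodOrZero fun i => (inner ℂ (x i) (y i) : ℂ) := rfl

theorem hform_update_right [DecidableEq I] (x y : ∀ i, H i) (i : I) (v : H i) :
    hform H x (update y i v) =
      inner ℂ (x i) v * finprodOrZero (update (fun j => (inner ℂ (x j) (y j) : ℂ)) i 1) := by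
  rw [hform_eq_finprodOrZero, ← finprodOrZero_update]
  congr 1
  exact funext (apply_update (fun j => inner ℂ (x j)) y i v)

theorem star_hform (x y : ∀ i, H i) : star (hform H x y) = hform H y x := by
  rw [hform_eq_finprodOrZero, hform_eq_finprodOrZero, ← finprodOrZero_star]
  simp only [← starRingEnd_apply, inner_conj_symm]

noncomputable def hformMultilinear (x : ∀ i, H i) : MultilinearMap ℂ H ℂ where
  toFun := hform H x
  map_update_add' y i u v := by simp only [hform_update_right, inner_add_right, add_mul]
  map_update_smul' y i c u := by
    simp only [hform_update_right, inner_smul_right, smul_eq_mul, mul_assoc]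

variable (H) in
noncomputable def tensorInner : (⨂[ℂ] i, H i) →ₗ⋆[ℂ] (⨂[ℂ] i, H i) →ₗ[ℂ] ℂ :=
  sesqLift hformMultilinear star_hform

@[simp]
theorem tensorInner_tprod_tprod (x y : ∀ i, H i) :
    tensorInner H (tprod ℂ x) (tprod ℂ y) = hform H x y :=
  sesqLift_tprod_tprod x y

theorem isSymm_tensorInner : (tensorInner H).IsSymm := isSymm_sesqLift

theorem hform_eq_zero_of_infinite {x y : ∀ i, H i} (hx : ∀ i, ‖x i‖ = 1) (hy : ∀ i, ‖y i‖ = 1)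
    (h : {i | x i ≠ y i}.Infinite) : hform H x y = 0 := by
  have hsupp : mulSupport (fun i => (inner ℂ (x i) (y i) : ℂ)) = {i | x i ≠ y i} := by
    ext i
    exact (inner_eq_one_iff_of_norm_eq_one (hx i) (hy i)).not
  rw [hform_eq_finprodOrZero, finprodOrZero, hsupp, if_neg h]

theorem hform_eq_prod {x y : ∀ i, H i} {S : Finset I} (hxy : ∀ i ∉ S, x i = y i)
    (hy : ∀ i ∉ S, ‖y i‖ = 1) : hform H x y = ∏ i ∈ S, (inner ℂ (x i) (y i) : ℂ) := by
  refine finprodOrZero_eq_prod fun i hi => by_contra fun hiS => hi ?_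
  change inner ℂ (x i) (y i) = (1 : ℂ)
  rw [hxy i hiS]
  exact (inner_eq_one_iff_of_norm_eq_one (hy i hiS) (hy i hiS)).2 rfl

theorem tensorInner_extendBy_tprod {S : Finset I} {z : ∀ i, H i} (hz : ∀ i ∉ S, ‖z i‖ = 1)
    (v w : ∀ i : S, H i) :
    tensorInner H (extendBy (· ∈ S) (fun i => z i) (tprod ℂ v))
      (extendBy (· ∈ S) (fun i => z i) (tprod ℂ w)) = ∏ i, (inner ℂ (v i) (w i) : ℂ) := by
  rw [extendBy_tprod, extendBy_tprod, tensorInner_tprod_tprod,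
    hform_eq_prod (S := S) (fun i hi => by simp [hi]) (fun i hi => by simp [hi, hz i hi]),
    ← Finset.prod_coe_sort S]
  simp only [Finset.coe_mem, dite_true]

theorem isPosDefAt_tensorInner_sum_of_eq_off {ι : Type*} (F : Finset ι) (a : ι → ℂ)
    (x : ι → ∀ i, H i) (z : ∀ i, H i) (S : Finset I) (hz : ∀ i ∉ S, ‖z i‖ = 1)
    (hxz : ∀ j ∈ F, ∀ i ∉ S, x j i = z i) :
    (tensorInner H).IsPosDefAt (∑ j ∈ F, a j • tprod ℂ (x j)) := by
  let V : ∀ i : S, Submodule ℂ (H i) := fun i => Submodule.span ℂ (Set.range fun j : F => x j i)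
  have : ∀ i, FiniteDimensional ℂ (V i) := fun i =>
    FiniteDimensional.span_of_finite ℂ (Set.finite_range _)
  let b := fun i => stdOrthonormalBasis ℂ (V i)
  let e := Basis.piTensorProduct fun i => (b i).toBasis
  let Φ : (⨂[ℂ] i : S, V i) →ₗ[ℂ] ⨂[ℂ] i, H i :=
    (extendBy (· ∈ S) fun i => z i).comp (map fun i => (V i).subtype)
  have horth : ∀ r s, tensorInner H (Φ (e r)) (Φ (e s)) = if r = s then 1 else 0 := by
    intro r s
    simp only [Φ, e, Basis.piTensorProduct_apply, LinearMap.comp_apply, map_tprod,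
      tensorInner_extendBy_tprod hz, Submodule.subtype_apply, OrthonormalBasis.coe_toBasis,
      ← Submodule.coe_inner, orthonormal_iff_ite.1 (b _).orthonormal, Fintype.prod_boole,
      ← funext_iff]
  let ζ : ⨂[ℂ] i : S, V i :=
    ∑ j ∈ F.attach, a j • tprod ℂ fun i => ⟨x j i, Submodule.subset_span ⟨j, rfl⟩⟩
  have hζ : Φ ζ = ∑ j ∈ F, a j • tprod ℂ (x j) := by
    rw [← F.sum_attach]
    simp only [Φ, ζ, map_sum, map_smul, LinearMap.comp_apply, map_tprod, extendBy_tprod]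
    refine Finset.sum_congr rfl fun j _ => ?_
    congr 2
    funext i
    split_ifs with hi
    · rfl
    · exact (hxz j j.2 i hi).symm
  rw [← hζ, ← e.sum_repr ζ, map_sum]
  simp only [map_smul]
  exact LinearMap.isPosDefAt_sum_smul_of_orthonormal _ _ horth _

theorem tensorInner_sum_sum_eq_zero {ι κ : Type*} {x : ι → ∀ i, H i} {y : κ → ∀ i, H i}
    (hx : ∀ j i, ‖x j i‖ = 1) (hy : ∀ k i, ‖y k i‖ = 1) (F : Finset ι) (G : Finset κ)
    (a : ι → ℂ) (b : κ → ℂ) (h : ∀ j ∈ F, ∀ k ∈ G, {i | x j i ≠ y k i}.Infinite) :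
    tensorInner H (∑ j ∈ F, a j • tprod ℂ (x j)) (∑ k ∈ G, b k • tprod ℂ (y k)) = 0 := by
  simp only [map_sum, map_smul, LinearMap.map_smulₛₗ, LinearMap.sum_apply, LinearMap.smul_apply,
    tensorInner_tprod_tprod]
  refine Finset.sum_eq_zero fun k hk => smul_eq_zero_of_right _ <|
    Finset.sum_eq_zero fun j hj => ?_
  rw [hform_eq_zero_of_infinite (hx j) (hy k) (h j hj k hk), smul_zero]

theorem isPosDefAt_tensorInner_sum {ι : Type*} (x : ι → ∀ i, H i) (hx : ∀ j i, ‖x j i‖ = 1)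
    (a : ι → ℂ) (F : Finset ι) : (tensorInner H).IsPosDefAt (∑ j ∈ F, a j • tprod ℂ (x j)) := by
  induction F using Finset.strongInduction with
  | H F ih =>
    obtain rfl | ⟨j₀, hj₀⟩ := F.eq_empty_or_nonempty
    · simp [LinearMap.IsPosDefAt]
    let C : ι → Prop := fun j => {i | x j i ≠ x j₀ i}.Finite
    rw [← Finset.sum_filter_add_sum_filter_not F C]
    refine LinearMap.IsPosDefAt.add isSymm_tensorInner ?_ (ih _ ?_) ?_
    · have hfin : (⋃ j ∈ F.filter C, {i | x j i ≠ x j₀ i}).Finite :=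
        (F.filter C).finite_toSet.biUnion fun j hj => (Finset.mem_filter.1 hj).2
      refine isPosDefAt_tensorInner_sum_of_eq_off _ _ _ (x j₀) hfin.toFinset
        (fun i _ => hx j₀ i) fun j hj i hi => by_contra fun hne => hi ?_
      simp only [Set.Finite.mem_toFinset, Set.mem_iUnion]
      exact ⟨j, hj, hne⟩
    · exact Finset.filter_ssubset.2 ⟨j₀, hj₀, by simp [C]⟩
    · refine tensorInner_sum_sum_eq_zero hx hx _ _ _ _ fun j hj k hk hjk => ?_
      have hk : ¬ C k := (Finset.mem_filter.1 hk).2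
      refine hk ((hjk.union (Finset.mem_filter.1 hj).2).subset fun i hi => ?_)
      by_cases h : x j i = x k i
      · exact Or.inr fun h' => hi (h ▸ h')
      · exact Or.inl h

theorem isPosDefAt_tensorInner_of_mem_unTensorSpan {ξ : ⨂[ℂ] i, H i} (hξ : ξ ∈ unTensorSpan H) :
    (tensorInner H).IsPosDefAt ξ := by
  obtain ⟨n, a, t, rfl⟩ := Submodule.mem_span_set'.1 hξ
  choose x hx hxt using fun j => (t j).2
  simp only [hxt]
  exact isPosDefAt_tensorInner_sum x hx a Finset.univ

end TensorInner

theorem exists_inner_product_unTensorSpan_general {I : Type*} (H : I → Type*)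
    [∀ i, NormedAddCommGroup (H i)] [∀ i, InnerProductSpace ℂ (H i)] :
    ∃ B : unTensorSpan H → unTensorSpan H → ℂ,
      (∀ ξ ξ' η : unTensorSpan H, B (ξ + ξ') η = B ξ η + B ξ' η) ∧
      (∀ (c : ℂ) (ξ η : unTensorSpan H), B (c • ξ) η = conj c * B ξ η) ∧
      (∀ ξ η η' : unTensorSpan H, B ξ (η + η') = B ξ η + B ξ η') ∧
      (∀ (c : ℂ) (ξ η : unTensorSpan H), B ξ (c • η) = c * B ξ η) ∧
      (∀ (x y : ∀ i, H i) (hx : ∀ i, ‖x i‖ = 1) (hy : ∀ i, ‖y i‖ = 1),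
        B (unTensorElem H x hx) (unTensorElem H y hy) = hform H x y) ∧
      (∀ ξ η : unTensorSpan H, B η ξ = conj (B ξ η)) ∧
      (∀ ξ : unTensorSpan H, (B ξ ξ).im = 0 ∧ 0 ≤ (B ξ ξ).re) ∧
      (∀ ξ : unTensorSpan H, B ξ ξ = 0 → ξ = 0) := by
  refine ⟨fun ξ η => tensorInner H ξ η, fun ξ ξ' η => by simp, fun c ξ η => by simp,
    fun ξ η η' => by simp, fun c ξ η => by simp, fun x y _ _ => tensorInner_tprod_tprod x y,
    fun ξ η => (isSymm_tensorInner.eq (ξ : ⨂[ℂ] i, H i) η).symm, fun ξ => ?_, fun ξ hξ => ?_⟩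
  · obtain ⟨hre, him⟩ := Complex.nonneg_iff.1 (isPosDefAt_tensorInner_of_mem_unTensorSpan ξ.2).1
    exact ⟨him.symm, hre⟩
  · exact Subtype.ext ((isPosDefAt_tensorInner_of_mem_unTensorSpan ξ.2).2 hξ)

/-- `⨂^un_{i∈I} H_i` carries an inner product (a conjugate-linear/linear, Hermitian,
positive definite form) determined on elementary tensors of unit families by `h`. -/
theorem exists_inner_product_unTensorSpan {I : Type*} [Infinite I] (H : I → Type*)
    [∀ i, NormedAddCommGroup (H i)] [∀ i, InnerProductSpace ℂ (H i)] :
    ∃ B : unTensorSpan H → unTensorSpan H → ℂ,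
      (∀ ξ ξ' η : unTensorSpan H, B (ξ + ξ') η = B ξ η + B ξ' η) ∧
      (∀ (c : ℂ) (ξ η : unTensorSpan H), B (c • ξ) η = conj c * B ξ η) ∧
      (∀ ξ η η' : unTensorSpan H, B ξ (η + η') = B ξ η + B ξ η') ∧
      (∀ (c : ℂ) (ξ η : unTensorSpan H), B ξ (c • η) = c * B ξ η) ∧
      (∀ (x y : ∀ i, H i) (hx : ∀ i, ‖x i‖ = 1) (hy : ∀ i, ‖y i‖ = 1),
        B (unTensorElem H x hx) (unTensorElem H y hy) = hform H x y) ∧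
      (∀ ξ η : unTensorSpan H, B η ξ = conj (B ξ η)) ∧
      (∀ ξ : unTensorSpan H, (B ξ ξ).im = 0 ∧ 0 ≤ (B ξ ξ).re) ∧
      (∀ ξ : unTensorSpan H, B ξ ξ = 0 → ξ = 0) :=
  exists_inner_product_unTensorSpan_general H
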